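/- arXiv:2407.20486 — 3 statements merged into one kernel-verified Lean document; each statement's English description precedes it below -/
import Mathlib

section
/- Let c_0, ..., c_l be complex numbers. The pairing ⟨f, g⟩ := Σ_{c} res_{z=c}(f(z)g(z)) (sum over all poles) between the quotient space ℂ[z]/⟨∏_{i=0}^{l}(z-c_i)⟩ and the space L of rational functions spanned by 1/∏_{ν=0}^{i}(z-c_ν) for i=0,...,l is non-degenerate; moreover the bases {1, (z-c_0), (z-c_0)(z-c_1), ..., ∏_{ν=0}^{l-1}(z-c_ν)} and {1/(z-c_0), 1/((z-c_0)(z-c_1)), ..., 1/∏_{ν=0}^{l}(z-c_ν)} are dual bases with respect to this pairing, i.e. ⟨∏_{ν=0}^{j-1}(z-c_ν), 1/∏_{ν=0}^{j'}(z-c_ν)⟩ = δ_{j,j'}. -/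
/-- Residue of a rational function at `c ∈ ℂ` (coefficient of `1/(z-c)` in the
Laurent expansion at `c`). -/
noncomputable def resAt (c : ℂ) (f : RatFunc ℂ) : ℂ :=
  ((RatFunc.laurent c f : RatFunc ℂ) : LaurentSeries ℂ).coeff (-1)

/-- The pairing `⟨p, g⟩ = Σ_{c ∈ {c_0,…,c_l}} res_{z=c} (p(z)·g(z))` between polynomials
(representing classes of `ℂ[z]/⟨∏(z-c_i)⟩`) and rational functions. -/
noncomputable def pairingRes (l : ℕ) (c : Fin (l + 1) → ℂ) (p : Polynomial ℂ)
    (g : RatFunc ℂ) : ℂ :=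
  ∑ a ∈ Finset.image c Finset.univ,
    resAt a (algebraMap (Polynomial ℂ) (RatFunc ℂ) p * g)

/-- The `j`-th element `∏_{ν=0}^{j-1}(z - c_ν)` of the standard basis of
`ℂ[z]/⟨∏_{i=0}^l (z-c_i)⟩` (empty product = 1). -/
noncomputable def stdPolyBasis (l : ℕ) (c : Fin (l + 1) → ℂ) (j : Fin (l + 1)) :
    Polynomial ℂ :=
  ∏ ν ∈ Finset.Iio j, (Polynomial.X - Polynomial.C (c ν))

/-- The `j'`-th element `1/∏_{ν=0}^{j'}(z - c_ν)` of the standard basis of the space `L`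
spanned by the partial fractions. -/
noncomputable def stdFracBasis (l : ℕ) (c : Fin (l + 1) → ℂ) (j' : Fin (l + 1)) :
    RatFunc ℂ :=
  1 / ∏ ν ∈ Finset.Iic j', (RatFunc.X - RatFunc.C (c ν))


/-!
For `j ≤ j'` the product `∏_{ν<j}(z-c_ν) · 1/∏_{ν≤j'}(z-c_ν)` is `1/∏_{j≤ν≤j'}(z-c_ν)`, while for
`j > j'` it is a polynomial and has no residues. The residues of `1/∏_{x∈m}(z-x)`, summed over a set
containing all its poles, add up to `1` if the multiset `m` is a singleton and to `0` otherwise: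
for a power `(z-a)^{-n}` this is read off the Laurent expansion at `a`, and two distinct nodes
`a ≠ b` are separated by `1/((z-a)(z-b)) = (1/(z-a) - 1/(z-b))/(a-b)`, which turns the sum into the
difference of two equal sums over a smaller multiset.

Given the duality, pairing against the `stdFracBasis` is a surjective linear map from polynomials of
degree `≤ l` onto `ℂ^{l+1}`, hence injective by counting dimensions.
-/

open Polynomial

namespace RatFunc

variable {K : Type*} [Field K]

theorem X_sub_C_ne_zero (a : K) : (X - C a : RatFunc K) ≠ 0 := by
  rw [← algebraMap_X, ← algebraMap_C, ← map_sub]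
  exact algebraMap_ne_zero (Polynomial.X_sub_C_ne_zero a)

theorem prod_X_sub_C_ne_zero {ι : Type*} (s : Finset ι) (c : ι → K) :
    ∏ ν ∈ s, (X - C (c ν)) ≠ 0 :=
  Finset.prod_ne_zero_iff.mpr fun ν _ => X_sub_C_ne_zero (c ν)

theorem algebraMap_prod_X_sub_C {ι : Type*} (s : Finset ι) (c : ι → K) :
    algebraMap K[X] (RatFunc K) (∏ ν ∈ s, (Polynomial.X - Polynomial.C (c ν)))
      = ∏ ν ∈ s, (X - C (c ν)) := by
  simp [map_prod, algebraMap_X, algebraMap_C]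

theorem inv_X_sub_C_mul_X_sub_C_mul {a b : K} (hab : a ≠ b) {r : RatFunc K} (hr : r ≠ 0) :
    ((X - C a) * ((X - C b) * r))⁻¹
      = (a - b)⁻¹ • (((X - C a) * r)⁻¹ - ((X - C b) * r)⁻¹) := by
  have ha := X_sub_C_ne_zero a
  have hb := X_sub_C_ne_zero b
  have hab' : C a - C b ≠ 0 := by
    rw [← map_sub, ← algebraMap_C]
    exact algebraMap_ne_zero (Polynomial.C_ne_zero.mpr (sub_ne_zero.mpr hab))
  rw [smul_eq_C_mul, map_inv₀, map_sub]
  field_simp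
  ring

theorem coe_algebraMap_polynomial (r : K[X]) :
    ((algebraMap K[X] (RatFunc K) r : RatFunc K) : LaurentSeries K)
      = ((r : PowerSeries K) : LaurentSeries K) :=
  (coe_coe r).symm

end RatFunc

theorem resAt_add (a : ℂ) (f g : RatFunc ℂ) : resAt a (f + g) = resAt a f + resAt a g := by
  simp only [resAt, map_add, HahnSeries.coeff_add]

theorem resAt_sub (a : ℂ) (f g : RatFunc ℂ) : resAt a (f - g) = resAt a f - resAt a g := by
  simp only [resAt, map_sub, HahnSeries.coeff_sub]

theorem resAt_smul (a k : ℂ) (f : RatFunc ℂ) : resAt a (k • f) = k * resAt a f := by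
  rw [resAt, resAt, Algebra.smul_def, map_mul, map_mul, RatFunc.algebraMap_eq_C,
    RatFunc.laurent_C, ← RatFunc.algebraMap_C, RatFunc.coe_algebraMap_polynomial,
    Polynomial.coe_C, PowerSeries.coe_C, HahnSeries.C_mul_eq_smul, HahnSeries.coeff_smul,
    smul_eq_mul]

theorem resAt_div_eq_zero {a : ℂ} (p : ℂ[X]) {q : ℂ[X]} (hq : q.eval a ≠ 0) :
    resAt a (algebraMap ℂ[X] (RatFunc ℂ) p / algebraMap ℂ[X] (RatFunc ℂ) q) = 0 := by
  -- As `q a ≠ 0`, the expansion of `q` at `a` is a unit power series `Q`, so that of `p / q` is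
  -- the power series `P * Q⁻¹`, which has no `X⁻¹` term.
  set P : PowerSeries ℂ := (taylor a p : PowerSeries ℂ)
  set Q : PowerSeries ℂ := (taylor a q : PowerSeries ℂ)
  have hQ : PowerSeries.constantCoeff Q ≠ 0 := by
    simpa [Q, taylor_coeff_zero] using hq
  have hQ' : (Q : LaurentSeries ℂ) ≠ 0 :=
    (map_ne_zero_iff _ HahnSeries.ofPowerSeries_injective).mpr fun h => hQ (by rw [h, map_zero])
  have hdiv : (P : LaurentSeries ℂ) / Q = ((P * Q⁻¹ : PowerSeries ℂ) : LaurentSeries ℂ) := by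
    rw [div_eq_iff hQ', ← PowerSeries.coe_mul, mul_assoc, PowerSeries.inv_mul_cancel _ hQ,
      mul_one]
  rw [resAt, RatFunc.laurent_div, map_div₀, RatFunc.coe_algebraMap_polynomial,
    RatFunc.coe_algebraMap_polynomial, hdiv, PowerSeries.coeff_coe, if_pos (by norm_num)]

theorem resAt_algebraMap (a : ℂ) (p : ℂ[X]) : resAt a (algebraMap ℂ[X] (RatFunc ℂ) p) = 0 := by
  simpa using resAt_div_eq_zero (a := a) p (q := 1) (by simp)

theorem resAt_inv_X_sub_C_pow (x a : ℂ) (n : ℕ) :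
    resAt x ((RatFunc.X - RatFunc.C a) ^ n)⁻¹ = if x = a then (if n = 1 then 1 else 0) else 0 := by
  rcases eq_or_ne x a with rfl | hxa
  · rw [if_pos rfl, resAt, map_inv₀, map_pow, map_sub, RatFunc.laurent_X, RatFunc.laurent_C,
      add_sub_cancel_right, map_inv₀, map_pow, RatFunc.coe_X, HahnSeries.single_pow, one_pow,
      HahnSeries.inv_single, inv_one, HahnSeries.coeff_single]
    simp [eq_comm]
  · have h := resAt_div_eq_zero (a := x) 1 (q := (X - C a) ^ n)
      (by rw [eval_pow]; exact pow_ne_zero _ (by simpa [sub_eq_zero] using hxa))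
    simpa [hxa, RatFunc.algebraMap_X, RatFunc.algebraMap_C] using h

theorem sum_resAt_inv_multiset_prod_X_sub_C {S : Finset ℂ} (m : Multiset ℂ)
    (hm : ∀ x ∈ m, x ∈ S) :
    ∑ x ∈ S, resAt x (m.map fun a => RatFunc.X - RatFunc.C a).prod⁻¹
      = if Multiset.card m = 1 then 1 else 0 := by
  by_cases hdistinct : ∃ a ∈ m, ∃ b ∈ m, a ≠ b
  · obtain ⟨a, ha, b, hb, hab⟩ := hdistinct
    obtain ⟨t, rfl⟩ := Multiset.exists_cons_of_mem ha
    obtain ⟨r, rfl⟩ := Multiset.exists_cons_of_mem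
      ((Multiset.mem_cons.mp hb).resolve_left hab.symm)
    have hr : (r.map fun a => RatFunc.X - RatFunc.C a).prod ≠ 0 := by
      simpa [Multiset.prod_eq_zero_iff] using fun x _ => RatFunc.X_sub_C_ne_zero x
    have ih_a := sum_resAt_inv_multiset_prod_X_sub_C (a ::ₘ r)
      fun x hx => hm x (Multiset.subset_of_le (Multiset.cons_le_cons a (Multiset.le_cons_self r b)) hx)
    have ih_b := sum_resAt_inv_multiset_prod_X_sub_C (b ::ₘ r)
      fun x hx => hm x (Multiset.mem_cons_of_mem hx)
    simp only [Multiset.map_cons, Multiset.prod_cons, Multiset.card_cons] at ih_a ih_b ⊢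
    simp only [RatFunc.inv_X_sub_C_mul_X_sub_C_mul hab hr, resAt_smul, resAt_sub,
      ← Finset.mul_sum, Finset.sum_sub_distrib, ih_a, ih_b]
    simp
  · push Not at hdistinct
    obtain ⟨a, hma⟩ : ∃ a, m = Multiset.replicate (Multiset.card m) a := by
      rcases m.empty_or_exists_mem with rfl | ⟨a, ha⟩
      · exact ⟨0, rfl⟩
      · exact ⟨a, Multiset.eq_replicate_card.mpr fun b hb => hdistinct b hb a ha⟩
    rw [hma, Multiset.map_replicate, Multiset.prod_replicate, Multiset.card_replicate]
    simp only [resAt_inv_X_sub_C_pow, Finset.sum_ite_eq']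
    by_cases haS : a ∈ S
    · rw [if_pos haS]
    · have hn : Multiset.card m ≠ 1 := fun hn =>
        haS (hm a (hma ▸ Multiset.mem_replicate.mpr ⟨by omega, rfl⟩))
      rw [if_neg haS, if_neg hn]
termination_by Multiset.card m
decreasing_by all_goals subst_vars; simp

theorem pairingRes_stdPolyBasis_stdFracBasis (l : ℕ) (c : Fin (l + 1) → ℂ) (j j' : Fin (l + 1)) :
    pairingRes l c (stdPolyBasis l c j) (stdFracBasis l c j') = if j = j' then 1 else 0 := by
  rw [pairingRes, stdPolyBasis, RatFunc.algebraMap_prod_X_sub_C, stdFracBasis, mul_one_div]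
  rcases le_or_gt j j' with hle | hlt
  · have hsplit : Finset.Iic j' \ Finset.Iio j = Finset.Icc j j' := by
      ext ν; simp [and_comm]
    have hsub : Finset.Iio j ⊆ Finset.Iic j' := fun ν hν =>
      Finset.mem_Iic.mpr ((Finset.mem_Iio.mp hν).le.trans hle)
    have hres := sum_resAt_inv_multiset_prod_X_sub_C (S := Finset.image c Finset.univ)
      ((Finset.Icc j j').val.map c)
      fun x hx => by obtain ⟨ν, -, rfl⟩ := Multiset.mem_map.mp hx; simp
    simp only [Multiset.map_map, Function.comp_def, Multiset.card_map, Finset.card_val,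
      Fin.card_Icc] at hres
    rw [← Finset.prod_sdiff hsub, hsplit,
      div_mul_cancel_right₀ (RatFunc.prod_X_sub_C_ne_zero _ _), Finset.prod_eq_multiset_prod, hres]
    have := Fin.le_def.mp hle
    congr 1
    rw [Fin.ext_iff]
    apply propext
    omega
  · have hsub : Finset.Iic j' ⊆ Finset.Iio j := fun ν hν =>
      Finset.mem_Iio.mpr ((Finset.mem_Iic.mp hν).trans_lt hlt)
    rw [← Finset.prod_sdiff hsub, mul_div_cancel_right₀ _ (RatFunc.prod_X_sub_C_ne_zero _ _),
      ← RatFunc.algebraMap_prod_X_sub_C, if_neg hlt.ne']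
    exact Finset.sum_eq_zero fun a _ => resAt_algebraMap a _

noncomputable def pairingResBilin (l : ℕ) (c : Fin (l + 1) → ℂ) :
    ℂ[X] →ₗ[ℂ] RatFunc ℂ →ₗ[ℂ] ℂ :=
  LinearMap.mk₂ ℂ (pairingRes l c)
    (fun p q g => by
      simp only [pairingRes, map_add, add_mul, resAt_add, Finset.sum_add_distrib])
    (fun k p g => by
      simp only [pairingRes, smul_eq_C_mul, map_mul, RatFunc.algebraMap_C,
        ← RatFunc.smul_eq_C_mul, smul_mul_assoc, resAt_smul, Finset.mul_sum, smul_eq_mul])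
    (fun p f g => by
      simp only [pairingRes, mul_add, resAt_add, Finset.sum_add_distrib])
    (fun k p g => by
      simp only [pairingRes, mul_smul_comm, resAt_smul, Finset.mul_sum, smul_eq_mul])

theorem pairingResBilin_apply (l : ℕ) (c : Fin (l + 1) → ℂ) (p : ℂ[X]) (g : RatFunc ℂ) :
    pairingResBilin l c p g = pairingRes l c p g := rfl

theorem pairingRes_stdPolyBasis_sum_smul_stdFracBasis (l : ℕ) (c : Fin (l + 1) → ℂ)
    (y : Fin (l + 1) → ℂ) (j : Fin (l + 1)) :
    pairingRes l c (stdPolyBasis l c j) (∑ j', y j' • stdFracBasis l c j') = y j := by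
  rw [← pairingResBilin_apply, map_sum]
  simp [pairingResBilin_apply, pairingRes_stdPolyBasis_stdFracBasis]

theorem degree_stdPolyBasis_le (l : ℕ) (c : Fin (l + 1) → ℂ) (j : Fin (l + 1)) :
    (stdPolyBasis l c j).degree ≤ l := by
  rw [stdPolyBasis,
    degree_eq_natDegree (monic_prod_of_monic _ _ fun ν _ => monic_X_sub_C (c ν)).ne_zero,
    natDegree_finsetProd_X_sub_C_eq_card, Fin.card_Iio]
  exact_mod_cast Nat.lt_succ_iff.mp j.isLt

theorem eq_zero_of_pairingRes_stdFracBasis_eq_zero (l : ℕ) (c : Fin (l + 1) → ℂ) {p : ℂ[X]}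
    (hp : p.degree ≤ l) (h : ∀ j', pairingRes l c p (stdFracBasis l c j') = 0) : p = 0 := by
  have hmem (q : ℂ[X]) (hq : q.degree ≤ l) : q ∈ degreeLT ℂ (l + 1) := by
    rwa [degreeLT_succ_eq_degreeLE, mem_degreeLE]
  let Φ : degreeLT ℂ (l + 1) →ₗ[ℂ] Fin (l + 1) → ℂ :=
    LinearMap.pi fun j' => (pairingResBilin l c).flip (stdFracBasis l c j') ∘ₗ
      (degreeLT ℂ (l + 1)).subtype
  have hsurj : Function.Surjective Φ := fun y =>
    ⟨∑ j, y j • ⟨stdPolyBasis l c j, hmem _ (degree_stdPolyBasis_le l c j)⟩, by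
      ext j'
      simp [Φ, pairingResBilin_apply, pairingRes_stdPolyBasis_stdFracBasis]⟩
  have hinj : Function.Injective Φ :=
    (LinearMap.injective_iff_surjective_of_finrank_eq_finrank
      (by simp [(degreeLTEquiv ℂ (l + 1)).finrank_eq])).mpr hsurj
  simpa using @hinj ⟨p, hmem p hp⟩ 0 (by ext j'; simp [Φ, pairingResBilin_apply, h])

/-- Proposition `prop:nondeg`.
The residue pairing between `ℂ[z]/⟨∏_{i=0}^{l}(z-c_i)⟩` (represented by polynomials of
degree ≤ l) and the space `L` spanned by `1/∏_{ν=0}^{i}(z-c_ν)`, `i = 0,…,l`, is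
non-degenerate; moreover the bases `{∏_{ν=0}^{j-1}(z-c_ν)}_j` and
`{1/∏_{ν=0}^{j'}(z-c_ν)}_{j'}` are dual bases: `⟨∏_{ν<j}(z-c_ν), 1/∏_{ν≤j'}(z-c_ν)⟩ = δ_{j,j'}`. -/
theorem residue_pairing_nondegenerate_dualBases (l : ℕ) (c : Fin (l + 1) → ℂ) :
    (∀ j j' : Fin (l + 1),
        pairingRes l c (stdPolyBasis l c j) (stdFracBasis l c j')
          = if j = j' then 1 else 0)
    ∧ (∀ p : Polynomial ℂ, p.degree ≤ (l : ℕ) →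
        (∀ y : Fin (l + 1) → ℂ,
          pairingRes l c p (∑ j', y j' • stdFracBasis l c j') = 0) → p = 0)
    ∧ (∀ y : Fin (l + 1) → ℂ,
        (∀ p : Polynomial ℂ, p.degree ≤ (l : ℕ) →
          pairingRes l c p (∑ j', y j' • stdFracBasis l c j') = 0) → y = 0) := by
  refine ⟨pairingRes_stdPolyBasis_stdFracBasis l c, fun p hp h => ?_, fun y h => ?_⟩
  · refine eq_zero_of_pairingRes_stdFracBasis_eq_zero l c hp fun j' => ?_
    simpa [Pi.single_apply] using h (Pi.single j' 1)
  · funext j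
    rw [← pairingRes_stdPolyBasis_sum_smul_stdFracBasis l c y j]
    exact h _ (degree_stdPolyBasis_le l c j)
end

section
/- Let X = (X_1,...,X_n) ∈ 𝔤^n for 𝔤 the Lie algebra of a connected reductive complex group G. Then the set of irreducible tuples — those not contained in any proper parabolic subalgebra of 𝔤 — is Zariski open in 𝔤^n. -/
/-!
By Burnside's theorem, `X` is irreducible iff the words in the `X_i` span all of `𝔤𝔩_n`, i.e.
iff some `n²` words are linearly independent. Independence of `n²` matrices is the nonvanishing
of the `n² × n²` determinant of their entries, and for words in `X` these determinants are
polynomials in the entries of `X`; the reducible locus is their common zero locus.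
-/

open Matrix

/-- A tuple `X = (X_1,…,X_d)` in `𝔤 = 𝔤𝔩_n(ℂ)` is *irreducible* if no proper parabolic
subalgebra of `𝔤𝔩_n` contains all the `X_i`; since the proper parabolic subalgebras of
`𝔤𝔩_n` are the stabilizers of (nonempty) flags of proper nonzero subspaces of `ℂ^n`,
this means that the `X_i` have no common invariant subspace `0 ≠ V ⊊ ℂ^n`. -/
def IsIrreducibleTuple (n d : ℕ) (X : Fin d → Matrix (Fin n) (Fin n) ℂ) : Prop :=
  ¬ ∃ V : Submodule ℂ (Fin n → ℂ), V ≠ ⊥ ∧ V ≠ ⊤ ∧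
      ∀ (i : Fin d), ∀ v ∈ V, (X i).mulVec v ∈ V

/-- A subset of `𝔤𝔩_n(ℂ)^d` is *Zariski closed* iff it is the common zero locus of a
set of polynomial functions of the matrix entries; a subset is *Zariski open* iff its
complement is Zariski closed. -/
def IsZariskiClosed (n d : ℕ) (S : Set (Fin d → Matrix (Fin n) (Fin n) ℂ)) : Prop :=
  ∃ T : Set (MvPolynomial (Fin d × Fin n × Fin n) ℂ),
    S = {Y | ∀ f ∈ T, MvPolynomial.aeval (fun q => Y q.1 q.2.1 q.2.2) f = 0}

theorem Submodule.span_range_eq_top_iff_exists_linearIndependent {K V ι κ : Type*} [DivisionRing K]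
    [AddCommGroup V] [Module K V] [FiniteDimensional K V] [Fintype κ]
    (hκ : Fintype.card κ = Module.finrank K V) (f : ι → V) :
    span K (Set.range f) = ⊤ ↔ ∃ g : κ → ι, LinearIndependent K (f ∘ g) := by
  refine ⟨fun h => ?_, fun ⟨g, hg⟩ => ?_⟩
  · obtain ⟨κ', a, -, hspan, hli⟩ := exists_linearIndependent' K f
    let b : Module.Basis κ' K V := .mk hli (by rw [hspan, h])
    have : Finite κ' := Module.Finite.finite_basis b
    obtain ⟨e⟩ : Nonempty (κ ≃ κ') := Finite.card_eq.1 (by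
      rw [Nat.card_eq_fintype_card, hκ, Module.finrank_eq_nat_card_basis b])
    exact ⟨a ∘ e, hli.comp e e.injective⟩
  · exact eq_top_iff.2 <| (hg.span_eq_top_of_card_eq_finrank' hκ).ge.trans
      (span_mono (Set.range_comp_subset_range g f))

theorem Algebra.adjoin_range_eq_span_range_freeMonoidLift {R A ι : Type*} [CommSemiring R]
    [Semiring A] [Algebra R A] (f : ι → A) :
    Subalgebra.toSubmodule (Algebra.adjoin R (Set.range f)) =
      Submodule.span R (Set.range (FreeMonoid.lift f)) := by
  rw [Algebra.adjoin_eq_span, ← FreeMonoid.mrange_lift, MonoidHom.coe_mrange]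

namespace Matrix

variable {ι m n R K : Type*}

section Square

variable [Fintype m] [DecidableEq m]

theorem mulVec_mem_of_mem_adjoin [CommSemiring R] {X : ι → Matrix m m R}
    {V : Submodule R (m → R)} (hV : ∀ i, ∀ v ∈ V, X i *ᵥ v ∈ V)
    {M : Matrix m m R} (hM : M ∈ Algebra.adjoin R (Set.range X)) : ∀ v ∈ V, M *ᵥ v ∈ V := by
  induction hM using Algebra.adjoin_induction with
  | mem _ hx => obtain ⟨i, rfl⟩ := hx; exact hV i
  | algebraMap r =>
    intro v hv
    rw [Algebra.algebraMap_eq_smul_one, smul_mulVec, one_mulVec]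
    exact V.smul_mem r hv
  | add M N _ _ hM hN => intro v hv; rw [add_mulVec]; exact V.add_mem (hM v hv) (hN v hv)
  | mul M N _ _ hM hN => intro v hv; rw [← mulVec_mulVec]; exact hM _ (hN v hv)

theorem exists_mulVec_eq [Field K] {u : m → K} (hu : u ≠ 0) (w : m → K) :
    ∃ M : Matrix m m K, M *ᵥ u = w := by
  obtain ⟨k, hk⟩ : ∃ k, u k ≠ 0 := Function.ne_iff.1 hu
  refine ⟨vecMulVec w (Pi.single k (u k)⁻¹), ?_⟩
  simp [vecMulVec_mulVec, hk]

theorem eq_bot_or_eq_top_of_forall_mulVec_mem [Field K] {V : Submodule K (m → K)}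
    (hV : ∀ M : Matrix m m K, ∀ v ∈ V, M *ᵥ v ∈ V) : V = ⊥ ∨ V = ⊤ := by
  refine or_iff_not_imp_left.2 fun hV₀ => Submodule.eq_top_iff'.2 fun w => ?_
  obtain ⟨u, hu, hu₀⟩ := V.ne_bot_iff.1 hV₀
  obtain ⟨M, rfl⟩ := exists_mulVec_eq hu₀ w
  exact hV M u hu

/-- **Burnside's theorem**, via Schur's lemma and the Jacobson density theorem. -/
theorem subalgebra_eq_top_of_isSimpleModule [Field K] [IsAlgClosed K]
    (A : Subalgebra K (Matrix m m K)) [IsSimpleModule A (m → K)] : A = ⊤ := by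
  classical
  have schur := IsSimpleModule.algebraMap_end_bijective_of_isAlgClosed K (A := A) (V := m → K)
  refine eq_top_iff.2 fun M _ => ?_
  let f : Module.End (Module.End A (m → K)) (m → K) :=
    { toFun := (M *ᵥ ·)
      map_add' := mulVec_add M
      map_smul' := fun φ v => by
        obtain ⟨c, rfl⟩ := schur.2 φ
        simp [mulVec_smul] }
  obtain ⟨r, hr⟩ := jacobson_density f (Finset.univ.image fun j => Pi.single j 1)
  have : M = r := ext_of_mulVec_single fun j =>
    hr _ (Finset.mem_image_of_mem _ (Finset.mem_univ j))
  exact this ▸ r.2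

end Square

def coordMatrix (f : ι → Matrix m n R) : Matrix ι (m × n) R :=
  of fun r c => f r c.1 c.2

theorem det_coordMatrix_ne_zero_iff [Fintype m] [DecidableEq m] [Fintype n] [DecidableEq n]
    [Field K] (f : m × n → Matrix m n K) :
    (coordMatrix f).det ≠ 0 ↔ LinearIndependent K f := by
  let e : Matrix m n K ≃ₗ[K] (m × n → K) :=
    (ofLinearEquiv K).symm.trans (LinearEquiv.curry K K m n).symm
  rw [← isUnit_iff_ne_zero, ← isUnit_iff_isUnit_det, ← linearIndependent_rows_iff_isUnit,
    ← LinearMap.linearIndependent_iff e.toLinearMap e.ker]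
  rfl

end Matrix

noncomputable def genericMatrix (R ι m : Type*) [CommSemiring R] :
    ι → Matrix m m (MvPolynomial (ι × m × m) R) :=
  fun i => of fun a b => MvPolynomial.X (i, a, b)

theorem mapMatrix_aeval_freeMonoidLift_genericMatrix {R ι m : Type*} [CommSemiring R] [Fintype m]
    [DecidableEq m] (Y : ι → Matrix m m R) (w : FreeMonoid ι) :
    (MvPolynomial.aeval fun q : ι × m × m => Y q.1 q.2.1 q.2.2).mapMatrix
      (FreeMonoid.lift (genericMatrix R ι m) w) = FreeMonoid.lift Y w := by
  have : (MonoidHomClass.toMonoidHom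
      (MvPolynomial.aeval fun q : ι × m × m => Y q.1 q.2.1 q.2.2).mapMatrix).comp
        (FreeMonoid.lift (genericMatrix R ι m)) =
      FreeMonoid.lift Y := by
    rw [FreeMonoid.comp_lift]
    congr 1
    ext i a b
    simp [genericMatrix]
  exact DFunLike.congr_fun this w

theorem aeval_det_coordMatrix_genericMatrix {R ι m : Type*} [CommRing R] [Fintype m]
    [DecidableEq m] (Y : ι → Matrix m m R) (W : m × m → FreeMonoid ι) :
    MvPolynomial.aeval (fun q : ι × m × m => Y q.1 q.2.1 q.2.2)
        (coordMatrix fun r => FreeMonoid.lift (genericMatrix R ι m) (W r)).det =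
      (coordMatrix fun r => FreeMonoid.lift Y (W r)).det := by
  rw [AlgHom.map_det]
  congr 1
  ext r c
  exact congr_fun₂ (mapMatrix_aeval_freeMonoidLift_genericMatrix Y (W r)) c.1 c.2

section IrreducibleTuple

variable {n d : ℕ} (X : Fin d → Matrix (Fin n) (Fin n) ℂ)

theorem isIrreducibleTuple_of_adjoin_eq_top (h : Algebra.adjoin ℂ (Set.range X) = ⊤) :
    IsIrreducibleTuple n d X := by
  rintro ⟨V, hV₀, hV₁, hV⟩
  refine (eq_bot_or_eq_top_of_forall_mulVec_mem fun M => ?_).elim hV₀ hV₁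
  exact mulVec_mem_of_mem_adjoin hV (h ▸ Algebra.mem_top)

theorem isSimpleModule_adjoin_of_isIrreducibleTuple [NeZero n] (h : IsIrreducibleTuple n d X) :
    IsSimpleModule (Algebra.adjoin ℂ (Set.range X)) (Fin n → ℂ) where
  eq_bot_or_eq_top W := by
    rw [← Submodule.restrictScalars_eq_bot_iff ℂ, ← Submodule.restrictScalars_eq_top_iff ℂ,
      or_iff_not_and_not]
    exact fun hW => h ⟨_, hW.1, hW.2, fun i v hv =>
      W.smul_mem ⟨X i, Algebra.subset_adjoin ⟨i, rfl⟩⟩ hv⟩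

theorem adjoin_eq_top_of_isIrreducibleTuple (h : IsIrreducibleTuple n d X) :
    Algebra.adjoin ℂ (Set.range X) = ⊤ := by
  rcases eq_or_ne n 0 with rfl | hn
  · exact Subsingleton.elim _ _
  · have : NeZero n := ⟨hn⟩
    have := isSimpleModule_adjoin_of_isIrreducibleTuple X h
    exact subalgebra_eq_top_of_isSimpleModule _

theorem isIrreducibleTuple_iff_adjoin_eq_top :
    IsIrreducibleTuple n d X ↔ Algebra.adjoin ℂ (Set.range X) = ⊤ :=
  ⟨adjoin_eq_top_of_isIrreducibleTuple X, isIrreducibleTuple_of_adjoin_eq_top X⟩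

end IrreducibleTuple

/-- The set of irreducible tuples — those not contained in any proper parabolic
subalgebra of `𝔤𝔩_n` — is Zariski open in `𝔤^d`. -/
theorem irreducible_locus_zariski_open (n d : ℕ) :
    IsZariskiClosed n d {X | ¬ IsIrreducibleTuple n d X} := by
  refine ⟨Set.range fun W : Fin n × Fin n → FreeMonoid (Fin d) =>
    (coordMatrix fun r => FreeMonoid.lift (genericMatrix ℂ (Fin d) (Fin n)) (W r)).det, ?_⟩
  ext Y
  have hcard : Fintype.card (Fin n × Fin n) = Module.finrank ℂ (Matrix (Fin n) (Fin n) ℂ) := by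
    simp [Module.finrank_matrix]
  simp only [Set.mem_ofPred_eq, Set.forall_mem_range, aeval_det_coordMatrix_genericMatrix,
    isIrreducibleTuple_iff_adjoin_eq_top, ← Algebra.toSubmodule_eq_top,
    Algebra.adjoin_range_eq_span_range_freeMonoidLift,
    Submodule.span_range_eq_top_iff_exists_linearIndependent hcard, not_exists]
  exact forall_congr' fun W => (det_coordMatrix_ne_zero_iff _).symm.not_left
end

section
/- Let H dz = (H_k/z^k + ... + H_1/z + H_res) dz/z be an unramified canonical form for a connected reductive group G, with Levi subgroups L_i = {g ∈ G : Ad(g)H_j = H_j for all j ≥ i} (i = 1,...,k) determined by the spectral data. Then dim 𝕆_H = δ(H), where 𝕆_H is the orbit of H under the coadjoint action of G(ℂ[z]/⟨z^{k+1}⟩) on 𝔤(ℂ[z]/⟨z^{k+1}⟩)^* ≅ 𝔤 ⊗ (z^{-(k+1)}ℂ[[z]]/ℂ[[z]]), and δ(H) = dim G + Σ_{i=1}^{k}(dim G − dim L_i) − dim Stab_G(H). -/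
/-!
Write `X(z) = ∑ X_j z^j` and `H(z) = ∑ H_m z^{-m}`. The tangent space `W` is the image of the
linear map `X ↦ principal part of [X(z), H(z)]` on `𝔤^{k+1}`, so by rank–nullity
`dim W = (k + 1) dim 𝔤 - dim ker`. The kernel is `∏_j (𝔤 ∩ 𝔩_j)` with `𝔩_0 = Lie Stab_G(H)`:
a kernel element satisfies `[X_j, H_m] = 0` for every `m ≥ j`, by descending induction on the gap
`m - j` and, for a fixed gap, on `j`. Since the `H_m` commute, bracketing an equation with `H_m`
leaves only `(ad H_m)² X_j = 0`, and semisimplicity of `ad H_m` gives `ad H_m X_j = 0`.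
-/

open Module Finset

attribute [local instance 100] LieRing.ofAssociativeRing

lemma Module.End.IsSemisimple.apply_eq_zero_of_apply_apply_eq_zero {K M : Type*} [Field K]
    [AddCommGroup M] [Module K M] {f : End K M} (hf : f.IsSemisimple) {x : M}
    (hx : f (f x) = 0) : f x = 0 := by
  have hx2 : x ∈ f.genEigenspace 0 (2 : ℕ) := by
    rw [mem_genEigenspace_nat, LinearMap.mem_ker]
    simpa [sq] using hx
  rw [hf.isFinitelySemisimple.genEigenspace_eq_eigenspace 0 (by norm_num)] at hx2
  simpa using hx2

lemma Matrix.isSemisimple_ad_of_isSemisimple_mulVecLin {K n : Type*} [Field K] [PerfectField K]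
    [Fintype n] [DecidableEq n] {C : Matrix n n K} (hC : Module.End.IsSemisimple C.mulVecLin) :
    (LieAlgebra.ad K (Matrix n n K) C).IsSemisimple := by
  set e := (Matrix.toLinAlgEquiv' : Matrix n n K ≃ₐ[K] _).toLieEquiv
  rw [LinearEquiv.isSemisimple_iff _ (e.toLinearEquiv.conj (LieAlgebra.ad K _ C)) e.toLinearEquiv
    (by ext x : 1; simpa using e.map_lie C x), LieAlgebra.conj_ad_apply]
  exact LieAlgebra.ad_isSemisimple_of_isSemisimple hC

lemma lie_eq_zero_comm {L : Type*} [LieRing L] {x y : L} : ⁅x, y⁆ = 0 ↔ ⁅y, x⁆ = 0 := by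
  rw [← lie_skew, neg_eq_zero]

section TruncatedCoadjoint

variable {K L : Type*} [Field K] [LieRing L] [LieAlgebra K L]

variable (K) in
/-- With `A m` the coefficient of `z^{-m}` in `H(z)`, this is the Lie algebra `𝔩_j`
(and `Lie Stab_G(H)` for `j = 0`). -/
def tailCentralizer (A : ℕ → L) (j : ℕ) : Submodule K L :=
  ⨅ (m : ℕ) (_ : j ≤ m), LinearMap.ker (LieAlgebra.ad K L (A m))

/-- `X j` is the coefficient of `z^j` in `X(z) ∈ V ⊗ ℂ[z]/⟨z^{k+1}⟩` and the `i`-th entry of the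
image is the coefficient of `z^{-i}` in `[X(z), ∑ A m z^{-m}]`. -/
def truncatedCoadjoint (V : Submodule K L) (A : ℕ → L) (k : ℕ) :
    (Fin (k + 1) → V) →ₗ[K] ℕ → L where
  toFun X i := ∑ j : Fin (k + 1), ⁅(X j : L), A (i + j)⁆
  map_add' X Y := by ext i; simp [sum_add_distrib]
  map_smul' c X := by ext i; simp [smul_sum]

variable {A X : ℕ → L} {k : ℕ} {V : Submodule K L}

lemma mem_tailCentralizer {j : ℕ} {x : L} :
    x ∈ tailCentralizer K A j ↔ ∀ m, j ≤ m → ⁅A m, x⁆ = 0 := by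
  simp [tailCentralizer]

lemma biInf_ker_ad_eq_tailCentralizer (hA : ∀ m, k < m → A m = 0) {s : Finset ℕ} {j : ℕ}
    (hs : ∀ m, m ∈ s ↔ j ≤ m ∧ m ≤ k) :
    ⨅ m ∈ s, LinearMap.ker (LieAlgebra.ad K L (A m)) = tailCentralizer K A j := by
  ext x
  simp only [Submodule.mem_iInf, LinearMap.mem_ker, LieAlgebra.ad_apply, mem_tailCentralizer, hs]
  refine ⟨fun h m hjm => ?_, fun h m hm => h m hm.1⟩
  rcases le_or_gt m k with hmk | hkm
  · exact h m ⟨hjm, hmk⟩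
  · rw [hA m hkm, zero_lie]

lemma lie_eq_zero_of_sum_lie_eq_zero_of_gap (hA : ∀ m, k < m → A m = 0)
    (hAA : ∀ m m', ⁅A m, A m'⁆ = 0) (hss : ∀ m, 1 ≤ m → (LieAlgebra.ad K L (A m)).IsSemisimple)
    (hX : ∀ i, ∑ j ∈ range (k + 1), ⁅X j, A (i + j)⁆ = 0) {i : ℕ}
    (hwider : ∀ j m, i + j < m → ⁅X j, A m⁆ = 0) (j : ℕ) : ⁅X j, A (i + j)⁆ = 0 := by
  suffices h : ∀ n j, k < j + n → ⁅X j, A (i + j)⁆ = 0 from h (k + 1) j (by omega)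
  intro n
  induction n with
  | zero => intro j hj; rw [hA _ (by omega), lie_zero]
  | succ n ih =>
    intro j hj
    rcases lt_or_ge k j with hkj | hjk
    · rw [hA _ (by omega), lie_zero]
    have hsum : ∑ j' ∈ range (j + 1), ⁅X j', A (i + j')⁆ = 0 := by
      rw [← hX i]
      refine sum_subset (by simp; omega) fun j' _ hj' => ih j' ?_
      simp at hj'
      omega
    rcases j.eq_zero_or_pos with rfl | hj0
    · simpa using hsum
    have hlower : ∀ j' ∈ range j, ⁅A (i + j), ⁅X j', A (i + j')⁆⁆ = 0 := fun j' hj' => by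
      rw [mem_range] at hj'
      rw [leibniz_lie, lie_eq_zero_comm.1 (hwider j' (i + j) (by omega)), zero_lie, hAA,
        lie_zero, add_zero]
    have hdouble : ⁅A (i + j), ⁅A (i + j), X j⁆⁆ = 0 := by
      have h := congrArg (⁅A (i + j), ·⁆) hsum
      rwa [lie_sum, lie_zero, sum_range_succ, sum_eq_zero hlower, zero_add,
        ← lie_skew (X j) (A (i + j)), lie_neg, neg_eq_zero] at h
    exact lie_eq_zero_comm.1 <|
      (hss (i + j) (by omega)).apply_eq_zero_of_apply_apply_eq_zero hdouble

lemma lie_eq_zero_of_sum_lie_eq_zero (hA : ∀ m, k < m → A m = 0)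
    (hAA : ∀ m m', ⁅A m, A m'⁆ = 0) (hss : ∀ m, 1 ≤ m → (LieAlgebra.ad K L (A m)).IsSemisimple)
    (hX : ∀ i, ∑ j ∈ range (k + 1), ⁅X j, A (i + j)⁆ = 0) {j m : ℕ} (hjm : j ≤ m) :
    ⁅X j, A m⁆ = 0 := by
  suffices h : ∀ n i, k < i + n → ∀ j, ⁅X j, A (i + j)⁆ = 0 by
    simpa [Nat.sub_add_cancel hjm] using h (k + 1) (m - j) (by omega) j
  intro n
  induction n with
  | zero => intro i hi j; rw [hA _ (by omega), lie_zero]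
  | succ n ih =>
    refine fun i hi => lie_eq_zero_of_sum_lie_eq_zero_of_gap hA hAA hss hX fun j m hm => ?_
    simpa [Nat.sub_add_cancel (show j ≤ m by omega)] using ih (m - j) (by omega) j

@[simp]
lemma truncatedCoadjoint_apply (X : Fin (k + 1) → V) (i : ℕ) :
    truncatedCoadjoint V A k X i = ∑ j ∈ range (k + 1),
      ⁅Function.extend Fin.val (fun j => (X j : L)) 0 j, A (i + j)⁆ := by
  simp [truncatedCoadjoint, ← Fin.sum_univ_eq_sum_range, Fin.val_injective.extend_apply]

lemma coe_range_truncatedCoadjoint :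
    (LinearMap.range (truncatedCoadjoint V A k) : Set (ℕ → L)) =
      {Cf | ∃ X : ℕ → L, (∀ j, X j ∈ V) ∧ (∀ j, k < j → X j = 0) ∧
        ∀ i, Cf i = ∑ j ∈ range (k + 1), ⁅X j, A (i + j)⁆} := by
  ext Cf
  constructor
  · rintro ⟨X, rfl⟩
    refine ⟨Function.extend Fin.val (fun j => (X j : L)) 0, fun j => ?_, fun j hj => ?_,
      fun i => truncatedCoadjoint_apply X i⟩
    · by_cases h : ∃ a : Fin (k + 1), a = j
      · obtain ⟨a, rfl⟩ := h
        simp [Fin.val_injective.extend_apply]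
      · simp [Function.extend_apply' _ _ _ h]
    · exact Function.extend_apply' _ _ _ fun ⟨a, ha⟩ => by omega
  · rintro ⟨X, hXV, -, hCf⟩
    refine ⟨fun j => ⟨X j, hXV j⟩, funext fun i => ?_⟩
    simp [truncatedCoadjoint, hCf, Fin.sum_univ_eq_sum_range (fun j => ⁅X j, A (i + j)⁆)]

lemma ker_truncatedCoadjoint (hA : ∀ m, k < m → A m = 0) (hAA : ∀ m m', ⁅A m, A m'⁆ = 0)
    (hss : ∀ m, 1 ≤ m → (LieAlgebra.ad K L (A m)).IsSemisimple) :
    LinearMap.ker (truncatedCoadjoint V A k) = LinearMap.range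
      (LinearMap.piMap fun j : Fin (k + 1) =>
        Submodule.inclusion (inf_le_left : V ⊓ tailCentralizer K A j ≤ V)) := by
  ext X
  constructor
  · intro hX
    have hsum (i : ℕ) : ∑ j ∈ range (k + 1),
        ⁅Function.extend Fin.val (fun j => (X j : L)) 0 j, A (i + j)⁆ = 0 := by
      rw [← truncatedCoadjoint_apply, LinearMap.mem_ker.1 hX, Pi.zero_apply]
    refine ⟨fun j => ⟨X j, (X j).2, mem_tailCentralizer.2 fun m hm => ?_⟩, rfl⟩
    simpa [Fin.val_injective.extend_apply, lie_eq_zero_comm] using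
      lie_eq_zero_of_sum_lie_eq_zero hA hAA hss hsum hm
  · rintro ⟨Y, rfl⟩
    refine LinearMap.mem_ker.2 <| funext fun i => ?_
    change ∑ j : Fin (k + 1), ⁅(Y j : L), A (i + j)⁆ = 0
    refine sum_eq_zero fun j _ => lie_eq_zero_comm.1 ?_
    exact mem_tailCentralizer.1 (Y j).2.2 _ (Nat.le_add_left _ _)

lemma finrank_range_truncatedCoadjoint_add [FiniteDimensional K V]
    (hA : ∀ m, k < m → A m = 0) (hAA : ∀ m m', ⁅A m, A m'⁆ = 0)
    (hss : ∀ m, 1 ≤ m → (LieAlgebra.ad K L (A m)).IsSemisimple) :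
    finrank K (LinearMap.range (truncatedCoadjoint V A k)) +
        ∑ j ∈ range (k + 1), finrank K ↥(V ⊓ tailCentralizer K A j) =
      (k + 1) * finrank K V := by
  have hinj : Function.Injective (LinearMap.piMap fun j : Fin (k + 1) =>
      Submodule.inclusion (inf_le_left : V ⊓ tailCentralizer K A j ≤ V)) :=
    .piMap fun j => Submodule.inclusion_injective inf_le_left
  have h := LinearMap.finrank_range_add_finrank_ker (truncatedCoadjoint V A k)
  rwa [ker_truncatedCoadjoint hA hAA hss, LinearMap.finrank_range_of_inj hinj,
    finrank_pi_fintype, finrank_pi_fintype,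
    Fin.sum_univ_eq_sum_range (fun j => finrank K ↥(V ⊓ tailCentralizer K A j)), sum_const,
    card_univ, Fintype.card_fin, smul_eq_mul] at h

end TruncatedCoadjoint

theorem truncated_orbit_dim_eq_delta_general (N k : ℕ)
    (𝔤 : LieSubalgebra ℂ (Matrix (Fin N) (Fin N) ℂ))
    (B : ℕ → Matrix (Fin N) (Fin N) ℂ)
    (hBtop : ∀ i, k < i → B i = 0)
    (hBcomm : ∀ i j, Commute (B i) (B j))
    (hBss : ∀ i, 1 ≤ i → Module.End.IsSemisimple (Matrix.mulVecLin (B i)))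
    (W : Submodule ℂ (ℕ → Matrix (Fin N) (Fin N) ℂ))
    (hW : (W : Set (ℕ → Matrix (Fin N) (Fin N) ℂ)) =
      {Cf | ∃ X : ℕ → Matrix (Fin N) (Fin N) ℂ,
        (∀ j, X j ∈ 𝔤) ∧ (∀ j, k < j → X j = 0) ∧
          ∀ i, Cf i = ∑ j ∈ Finset.range (k + 1), ⁅X j, B (i + j)⁆}) :
    (finrank ℂ W : ℤ)
      = (finrank ℂ 𝔤.toSubmodule : ℤ)
        + (∑ i ∈ Finset.Icc 1 k,
            ((finrank ℂ 𝔤.toSubmodule : ℤ) -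
              (finrank ℂ
                ↥(𝔤.toSubmodule ⊓ ⨅ m ∈ Finset.Icc i k,
                  LinearMap.ker
                    (LinearMap.mulLeft ℂ (B m) - LinearMap.mulRight ℂ (B m))) : ℤ)))
        - (finrank ℂ
            ↥(𝔤.toSubmodule ⊓ ⨅ m ∈ Finset.range (k + 1),
              LinearMap.ker
                (LinearMap.mulLeft ℂ (B m) - LinearMap.mulRight ℂ (B m))) : ℤ) := by
  have hWrange : W = LinearMap.range (truncatedCoadjoint 𝔤.toSubmodule B k) :=
    SetLike.coe_injective (by rw [hW, coe_range_truncatedCoadjoint]; rfl)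
  have hcentralizer (s : Finset ℕ) (j : ℕ) (hs : ∀ m, m ∈ s ↔ j ≤ m ∧ m ≤ k) :
      ⨅ m ∈ s, LinearMap.ker (LinearMap.mulLeft ℂ (B m) - LinearMap.mulRight ℂ (B m)) =
        tailCentralizer ℂ B j := by
    rw [← biInf_ker_ad_eq_tailCentralizer hBtop hs, LieAlgebra.ad_eq_lmul_left_sub_lmul_right]
    rfl
  have hdim := finrank_range_truncatedCoadjoint_add (V := 𝔤.toSubmodule) hBtop
    (fun m m' => (hBcomm m m').lie_eq)
    (fun m hm => Matrix.isSemisimple_ad_of_isSemisimple_mulVecLin (hBss m hm))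
  rw [range_eq_Ico, sum_eq_sum_Ico_succ_bot (by omega : 0 < k + 1), zero_add,
    Ico_add_one_right_eq_Icc] at hdim
  rw [hWrange, hcentralizer _ 0 (by simp),
    sum_congr rfl fun i hi => by rw [hcentralizer (Icc i k) i (by simp)],
    sum_sub_distrib, sum_const, Nat.card_Icc, nsmul_eq_mul]
  push_cast
  linarith [congrArg (Nat.cast : ℕ → ℤ) hdim]

/-- Corollary `cor:specdimorb`, `dim 𝕆_H = δ(H)`.
Let `𝔤 ⊆ 𝔤𝔩_N(ℂ)` be the Lie algebra of a (reductive) linear group `G` and let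
`H dz = (H_k/z^k + ⋯ + H_1/z + H_res) dz/z` be an unramified canonical form, with
coefficients `B i := H_i ∈ 𝔤` (`B 0 = H_res`), the `H_i` (`i ≥ 1`) semisimple and
mutually commuting and commuting with `H_res`.  The truncated orbit
`𝕆_H = Ad*(G(ℂ[z]/⟨z^{k+1}⟩))(H)` is a (locally closed) homogeneous submanifold of
`𝔤(ℂ[z]/⟨z^{k+1}⟩)* ≅ 𝔤 ⊗ z^{-(k+1)}ℂ[[z]]/ℂ[[z]]`, and its dimension equals the
dimension of its tangent space at `H`, i.e. of the image `W` of the infinitesimal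
coadjoint action `X(z) ↦ principal part of [X(z), H(z)]`.  Then
`dim 𝕆_H = δ(H) = dim G + Σ_{i=1}^{k} (dim G − dim L_i) − dim Stab_G(H)`,
where `L_i = {g : Ad(g)H_j = H_j, j ≥ i}` has Lie algebra
`𝔩_i = {Y ∈ 𝔤 : [Y,H_j] = 0, j ≥ i}` and `Lie(Stab_G(H)) = {Y ∈ 𝔤 : [Y,H_j] = 0 ∀j}`. -/
theorem truncated_orbit_dim_eq_delta (N k : ℕ)
    (𝔤 : LieSubalgebra ℂ (Matrix (Fin N) (Fin N) ℂ))
    (B : ℕ → Matrix (Fin N) (Fin N) ℂ)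
    (hBmem : ∀ i, B i ∈ 𝔤) (hBtop : ∀ i, k < i → B i = 0)
    (hBcomm : ∀ i j, Commute (B i) (B j))
    (hBss : ∀ i, 1 ≤ i → Module.End.IsSemisimple (Matrix.mulVecLin (B i)))
    (W : Submodule ℂ (ℕ → Matrix (Fin N) (Fin N) ℂ))
    (hW : (W : Set (ℕ → Matrix (Fin N) (Fin N) ℂ)) =
      {Cf | ∃ X : ℕ → Matrix (Fin N) (Fin N) ℂ,
        (∀ j, X j ∈ 𝔤) ∧ (∀ j, k < j → X j = 0) ∧
          ∀ i, Cf i = ∑ j ∈ Finset.range (k + 1), ⁅X j, B (i + j)⁆}) :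
    (finrank ℂ W : ℤ)
      = (finrank ℂ 𝔤.toSubmodule : ℤ)
        + (∑ i ∈ Finset.Icc 1 k,
            ((finrank ℂ 𝔤.toSubmodule : ℤ) -
              (finrank ℂ
                ↥(𝔤.toSubmodule ⊓ ⨅ m ∈ Finset.Icc i k,
                  LinearMap.ker
                    (LinearMap.mulLeft ℂ (B m) - LinearMap.mulRight ℂ (B m))) : ℤ)))
        - (finrank ℂ
            ↥(𝔤.toSubmodule ⊓ ⨅ m ∈ Finset.range (k + 1),
              LinearMap.ker
                (LinearMap.mulLeft ℂ (B m) - LinearMap.mulRight ℂ (B m))) : ℤ) :=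
  truncated_orbit_dim_eq_delta_general N k 𝔤 B hBtop hBcomm hBss W hW
end
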